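/- arXiv:2211.08311 — 2 statements merged into one kernel-verified Lean document; each statement's English description precedes it below -/
import Mathlib

section
/- Let τ ∈ [0,1] and let N : ℕ → ℕ be a counting process with N(0) = 0 and N(n) − N(n−1) ∈ {0,1} for all n ≥ 1, such that for every n ≥ 1, if N(n−1) < τ·n then N(n) = N(n−1) + 1 (the arm is pulled whenever below its fairness level). Then max(τ·n − N(n), 0) ≤ max(τ·0 − N(0), 0) + τ ≤ 1 for all n, i.e., the unfairness level never exceeds 1. -/
theorem unfairness_bounded (τ : ℝ) (hτ0 : 0 ≤ τ) (hτ1 : τ ≤ 1)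
    (N : ℕ → ℕ) (hN0 : N 0 = 0)
    (hstep : ∀ n : ℕ, 1 ≤ n → N n = N (n - 1) ∨ N n = N (n - 1) + 1)
    (hpull : ∀ n : ℕ, 1 ≤ n → ((N (n - 1) : ℝ) < τ * n → N n = N (n - 1) + 1)) :
    ∀ n : ℕ, max (τ * n - N n) 0 ≤ max (τ * 0 - N 0) 0 + τ ∧
      max (τ * 0 - N 0) 0 + τ ≤ 1 := by
  have key : ∀ n : ℕ, τ * n - N n ≤ τ := by
    intro n
    induction n with
    | zero => simp [hN0]; linarith
    | succ n ih =>
      by_cases h : (N n : ℝ) < τ * (n + 1)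
      · have := hpull (n + 1) (by omega) (by simpa using h)
        simp only [Nat.add_sub_cancel] at this
        rw [this]
        push_cast
        linarith
      · have hmono : (N n : ℝ) ≤ N (n + 1) := by
          rcases hstep (n + 1) (by omega) with h' | h' <;>
            simp only [Nat.add_sub_cancel] at h' <;> rw [h'] <;> push_cast <;> linarith
        push_cast
        push_neg at h
        linarith
  intro n
  have h0 : max (τ * 0 - (N 0 : ℝ)) 0 = 0 := by simp [hN0]
  rw [h0]
  constructor
  · have := key n
    simp only [zero_add]
    exact max_le this hτ0
  · linarith
end

section
/- Let τ ∈ (0,1) and let N : ℕ → ℕ satisfy N(0) = 0, N(n) ≤ N(n−1) + 1, and suppose m = sup{n ≤ t : τ·n ≤ N(n)} satisfies m < t. Then max(τ·t − N(t), 0) ≤ τ + (t − m) − #{n ∈ (m, t] : arm pulled at n}·1 ≤ τ + #{n ∈ (m, t] : arm not pulled at n} − (1 − τ)(t − m) + τ(t − m); in particular max(τ·t − N(t), 0) ≤ τ + #{n ∈ (m, t] : N(n) = N(n−1)} − (1 − τ)·(t − m) + τ·(t − m). -/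
theorem deficit_decomposition (τ : ℝ) (hτ0 : 0 < τ) (hτ1 : τ < 1)
    (N : ℕ → ℕ) (hN0 : N 0 = 0)
    (hmono : ∀ n : ℕ, 1 ≤ n → N (n - 1) ≤ N n)
    (hstep : ∀ n : ℕ, 1 ≤ n → N n ≤ N (n - 1) + 1)
    (t m : ℕ) (hmt : m < t)
    (hm : τ * m ≤ N m)
    (hlast : ∀ n : ℕ, m < n → n ≤ t → (N n : ℝ) < τ * n) :
    max (τ * t - N t) 0 ≤
      τ + ((Finset.Ioc m t).filter (fun n => N n = N (n - 1))).card
        - (1 - τ) * (t - m) + τ * (t - m) := by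
  have key : ∀ k : ℕ, N (m + k) +
      ((Finset.Ioc m (m + k)).filter (fun n => N n = N (n - 1))).card = N m + k := by
    intro k
    induction k with
    | zero => simp
    | succ k ih =>
      have h1 : 1 ≤ m + k + 1 := Nat.le_add_left 1 _
      have hIoc : Finset.Ioc m (m + k + 1) =
          insert (m + k + 1) (Finset.Ioc m (m + k)) := by
        ext n; simp [Finset.mem_Ioc]; omega
      have hnotmem : m + k + 1 ∉ Finset.Ioc m (m + k) := by
        simp [Finset.mem_Ioc]
      show N (m+k+1) + ((Finset.Ioc m (m+k+1)).filter (fun n => N n = N (n - 1))).card = N m + (k+1)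
      rw [hIoc, Finset.filter_insert]
      by_cases hc : N (m + k + 1) = N (m + k + 1 - 1)
      · rw [if_pos hc, Finset.card_insert_of_notMem
          (fun h => hnotmem (Finset.mem_of_mem_filter _ h))]
        have : N (m + k + 1) = N (m + k) := hc
        omega
      · rw [if_neg hc]
        have h2 : N (m + k) ≤ N (m + k + 1) := hmono (m + k + 1) h1
        have h3 : N (m + k + 1) ≤ N (m + k) + 1 := hstep (m + k + 1) h1
        have hc' : ¬ (N (m + k + 1) = N (m + k)) := hc
        omega
  have hkey := key (t - m)
  rw [Nat.add_sub_cancel' hmt.le] at hkey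
  have hNt : (N t : ℝ) + ((Finset.Ioc m t).filter (fun n => N n = N (n - 1))).card
      = N m + (t - m : ℕ) := by exact_mod_cast congrArg (Nat.cast (R := ℝ)) hkey
  have htm : ((t - m : ℕ) : ℝ) = (t : ℝ) - m := by
    rw [Nat.cast_sub hmt.le]
  rw [htm] at hNt
  have hlt : (N t : ℝ) < τ * t := hlast t hmt le_rfl
  have hmax : max (τ * t - N t) 0 = τ * t - N t := max_eq_left (by linarith)
  rw [hmax]
  have htm0 : (0:ℝ) ≤ (t:ℝ) - m := by
    have := hmt.le; have : (m:ℝ) ≤ t := by exact_mod_cast this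
    linarith
  nlinarith [mul_nonneg hτ0.le htm0]
end
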